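/- Let Ψ be a 2-form, ω a p-form and X ∈ V a vector. Then [Ψ, X∧ω] = X·[Ψ, ω] + 2(X⌟Ψ)·ω + [Ψ, X⌟ω]. -/

import Mathlib

open scoped BigOperators

namespace Paper

noncomputable section

/-- Coefficients of exterior forms w.r.t. the fixed orthonormal basis `e₁,…,e_q` of `V = ℝ^q`:
a form is identified with its family of coefficients indexed by subsets of `Fin q`. -/
abbrev Ext (q : ℕ) := Finset (Fin q) → ℝ

variable {q : ℕ}

/-- `(-1)^{#{j ∈ s | j < i}}` -/
def sgn (i : Fin q) (s : Finset (Fin q)) : ℝ := (-1 : ℝ) ^ (s.filter fun j => j < i).card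

/-- Exterior multiplication by the basis vector `e_i`. -/
def wB (i : Fin q) (ω : Ext q) : Ext q := fun s =>
  if i ∈ s then sgn i (s.erase i) * ω (s.erase i) else 0

/-- Interior product (contraction) with the basis vector `e_i`. -/
def iB (i : Fin q) (ω : Ext q) : Ext q := fun s =>
  if i ∈ s then 0 else sgn i s * ω (insert i s)

/-- The basis monomial `e_{i₁} ∧ ⋯ ∧ e_{i_p}`, for `s = {i₁ < ⋯ < i_p}`. -/
def bF (s : Finset (Fin q)) : Ext q := fun t => if t = s then 1 else 0

/-- The basis vector `e_i` of `V = ℝ^q`. -/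
def eB (i : Fin q) : Fin q → ℝ := Pi.single i 1

/-- Exterior multiplication by the vector `X ∈ V`. -/
def wV (X : Fin q → ℝ) (ω : Ext q) : Ext q := ∑ i, X i • wB i ω

/-- Interior product with the vector `X ∈ V`. -/
def iV (X : Fin q → ℝ) (ω : Ext q) : Ext q := ∑ i, X i • iB i ω

/-- Clifford multiplication `X · ω = X ∧ ω − X ⌟ ω` of a vector with a form. -/
def clV (X : Fin q → ℝ) (ω : Ext q) : Ext q := wV X ω - iV X ω

/-- Clifford multiplication `e_{i₁} · e_{i₂} ⋯ e_{i_p} · ω` for `s = {i₁ < ⋯ < i_p}`. -/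
def clB (s : Finset (Fin q)) (ω : Ext q) : Ext q :=
  (Finset.sort s (· ≤ ·)).foldr (fun i τ => clV (eB i) τ) ω

/-- Clifford multiplication of two forms. -/
def clM (ω₁ ω₂ : Ext q) : Ext q := ∑ s : Finset (Fin q), ω₁ s • clB s ω₂

/-- The bracket `[ω₁, ω₂] = ω₁ · ω₂ − ω₂ · ω₁`. -/
def brkt (ω₁ ω₂ : Ext q) : Ext q := clM ω₁ ω₂ - clM ω₂ ω₁

/-- Exterior multiplication by the monomial `e_{i₁} ∧ ⋯ ∧ e_{i_p}`. -/
def wBs (s : Finset (Fin q)) (ω : Ext q) : Ext q :=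
  (Finset.sort s (· ≤ ·)).foldr (fun i τ => wB i τ) ω

/-- The wedge product of two forms. -/
def wM (ω₁ ω₂ : Ext q) : Ext q := ∑ s : Finset (Fin q), ω₁ s • wBs s ω₂

/-- The inner product on forms, for which the basis monomials are orthonormal. -/
def ip (ω φ : Ext q) : ℝ := ∑ s : Finset (Fin q), ω s * φ s

/-- `ω` is a form of (pure) degree `p`. -/
def homog (p : ℕ) (ω : Ext q) : Prop := ∀ s : Finset (Fin q), s.card ≠ p → ω s = 0

/-- The inner product of two vectors of `V = ℝ^q`. -/
def dotP (X Y : Fin q → ℝ) : ℝ := ∑ i, X i * Y i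

/-- A vector of `V` regarded as a 1-form. -/
def oneF (X : Fin q → ℝ) : Ext q := ∑ i, X i • bF {i}

/-- The wedge `X ∧ Y` of two vectors. -/
def w2 (X Y : Fin q → ℝ) : Ext q := wV X (oneF Y)

/-- Two-element subsets, indexing the canonical orthonormal basis of `Λ²V`. -/
def twoSets (q : ℕ) : Finset (Finset (Fin q)) := Finset.univ.filter fun s => s.card = 2

/-- The Bochner operator quadratic form `⟨B_R^{[p]} ω, φ⟩ =
(1/4) Σ_{r,s} ⟨R ψ_r, ψ_s⟩ ⟨[ψ_r,ω],[ψ_s,φ]⟩`, computed in the canonical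
orthonormal basis `{e_i ∧ e_j}_{i<j}` of `Λ²V`. -/
def Bform (R : Ext q →ₗ[ℝ] Ext q) (ω φ : Ext q) : ℝ :=
  (1 / 4 : ℝ) * ∑ s ∈ twoSets q, ∑ t ∈ twoSets q,
    ip (R (bF s)) (bF t) * ip (brkt (bF s) ω) (brkt (bF t) φ)


/-!
Since `X ∧ ω = X · ω + X ⌟ ω`, it suffices to show `[Ψ, X · ω] = X · [Ψ, ω] + 2 (X ⌟ Ψ) · ω`.
Clifford multiplication is associative, so this follows from the commutator identity
`Ψ · X - X · Ψ = 2 X ⌟ Ψ` for 2-forms. By linearity that identity only has to be checked on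
`Ψ = e_i · e_j` with `i < j`, where it is a consequence of the Clifford relations
`e_i · e_j + e_j · e_i = -2 δ_ij` and `X ⌟ (e_i · ω) + e_i · (X ⌟ ω) = X_i ω`.
-/

lemma sgn_mul_self (i : Fin q) (s : Finset (Fin q)) : sgn i s * sgn i s = 1 := by
  rw [sgn, ← pow_add, ← two_mul, pow_mul]; norm_num

lemma sgn_of_forall_lt {i : Fin q} {s : Finset (Fin q)} (h : ∀ j ∈ s, i < j) : sgn i s = 1 := by
  rw [sgn, Finset.filter_eq_empty_iff.2 fun j hj => (h j hj).not_gt, Finset.card_empty, pow_zero]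

lemma sgn_insert (i : Fin q) {j : Fin q} {s : Finset (Fin q)} (hj : j ∉ s) :
    sgn i (insert j s) = (if j < i then -1 else 1) * sgn i s := by
  rw [sgn, sgn, Finset.filter_insert]
  split_ifs with h
  · rw [Finset.card_insert_of_notMem fun hc => hj (Finset.mem_of_mem_filter _ hc), pow_succ]
    ring
  · rw [one_mul]

lemma sgn_erase (i : Fin q) {j : Fin q} {s : Finset (Fin q)} (hj : j ∈ s) :
    sgn i s = (if j < i then -1 else 1) * sgn i (s.erase j) := by
  conv_lhs => rw [← Finset.insert_erase hj]
  exact sgn_insert i (Finset.notMem_erase j s)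

lemma ite_lt_neg_one_swap {i j : Fin q} (h : i ≠ j) :
    ((if j < i then -1 else 1) : ℝ) = -(if i < j then -1 else 1) := by
  rcases h.lt_or_gt with h | h
  · simp [h, h.not_gt]
  · simp [h, h.not_gt]

lemma wB_wB_self (i : Fin q) (ω : Ext q) : wB i (wB i ω) = 0 := by
  funext s
  simp [wB]

lemma iB_iB_self (i : Fin q) (ω : Ext q) : iB i (iB i ω) = 0 := by
  funext s
  simp [iB]

lemma wB_wB {i j : Fin q} (h : i ≠ j) (ω : Ext q) : wB i (wB j ω) = -wB j (wB i ω) := by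
  funext s
  simp only [wB, Pi.neg_apply]
  by_cases hi : i ∈ s <;> by_cases hj : j ∈ s
  · have hji : j ∈ s.erase i := Finset.mem_erase.2 ⟨h.symm, hj⟩
    have hij : i ∈ s.erase j := Finset.mem_erase.2 ⟨h, hi⟩
    have hcomm : (s.erase j).erase i = (s.erase i).erase j := Finset.erase_right_comm
    rw [if_pos hi, if_pos hj, if_pos hji, if_pos hij, sgn_erase i hji, sgn_erase j hij, hcomm,
      ite_lt_neg_one_swap h]
    ring
  · simp [hi, hj, Finset.mem_erase]
  · simp [hi, hj, Finset.mem_erase]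
  · simp [hi, hj]

lemma iB_iB {i j : Fin q} (h : i ≠ j) (ω : Ext q) : iB i (iB j ω) = -iB j (iB i ω) := by
  funext s
  simp only [iB, Pi.neg_apply]
  by_cases hi : i ∈ s <;> by_cases hj : j ∈ s
  · simp [hi, hj]
  · simp [hi, hj]
  · simp [hi, hj]
  · rw [if_neg hi, if_neg hj, if_neg (by simp [h.symm, hj]), if_neg (by simp [h, hi]),
      Finset.insert_comm, sgn_insert j hi, sgn_insert i hj, ite_lt_neg_one_swap h]
    ring

lemma iB_wB {i j : Fin q} (h : i ≠ j) (ω : Ext q) : iB i (wB j ω) = -wB j (iB i ω) := by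
  funext s
  simp only [iB, wB, Pi.neg_apply]
  by_cases hi : i ∈ s <;> by_cases hj : j ∈ s
  · simp [hi, hj, h]
  · simp [hi, hj]
  · have hi' : i ∉ s.erase j := fun hc => hi (Finset.mem_of_mem_erase hc)
    rw [if_neg hi, if_pos (Finset.mem_insert_of_mem hj), if_pos hj, if_neg hi',
      Finset.erase_insert_of_ne h, sgn_erase i hj, sgn_insert j hi', ite_lt_neg_one_swap h]
    split_ifs <;> ring
  · rw [if_neg hi, if_neg hj, if_neg (by simp [h.symm, hj])]
    simp

lemma iB_wB_add_wB_iB (i : Fin q) (ω : Ext q) : iB i (wB i ω) + wB i (iB i ω) = ω := by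
  funext s
  simp only [iB, wB, Pi.add_apply]
  by_cases hi : i ∈ s
  · rw [if_pos hi, if_pos hi, if_neg (Finset.notMem_erase i s), Finset.insert_erase hi,
      zero_add, ← mul_assoc, sgn_mul_self, one_mul]
  · rw [if_neg hi, if_neg hi, if_pos (Finset.mem_insert_self i s), Finset.erase_insert hi,
      add_zero, ← mul_assoc, sgn_mul_self, one_mul]

def wBₗ (i : Fin q) : Ext q →ₗ[ℝ] Ext q where
  toFun := wB i
  map_add' x y := by funext s; by_cases h : i ∈ s <;> simp [wB, h, mul_add]
  map_smul' r x := by funext s; by_cases h : i ∈ s <;> simp [wB, h, mul_left_comm]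

def iBₗ (i : Fin q) : Ext q →ₗ[ℝ] Ext q where
  toFun := iB i
  map_add' x y := by funext s; by_cases h : i ∈ s <;> simp [iB, h, mul_add]
  map_smul' r x := by funext s; by_cases h : i ∈ s <;> simp [iB, h, mul_left_comm]

lemma wB_sub (i : Fin q) (x y : Ext q) : wB i (x - y) = wB i x - wB i y := (wBₗ i).map_sub x y

lemma iB_sub (i : Fin q) (x y : Ext q) : iB i (x - y) = iB i x - iB i y := (iBₗ i).map_sub x y

def cB (i : Fin q) : Ext q →ₗ[ℝ] Ext q := wBₗ i - iBₗ i

lemma cB_apply (i : Fin q) (ω : Ext q) : cB i ω = wB i ω - iB i ω := rfl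

lemma cB_cB_add_cB_cB (i j : Fin q) (ω : Ext q) :
    cB i (cB j ω) + cB j (cB i ω) = if i = j then -(2 : ℝ) • ω else 0 := by
  simp only [cB_apply, wB_sub, iB_sub]
  split_ifs with h
  · subst h
    rw [wB_wB_self, iB_iB_self]
    linear_combination (norm := module) (-2 : ℝ) • iB_wB_add_wB_iB i ω
  · rw [wB_wB h, iB_iB h, iB_wB h, iB_wB (Ne.symm h)]
    abel

lemma iB_cB_add_cB_iB (i j : Fin q) (ω : Ext q) :
    iB i (cB j ω) + cB j (iB i ω) = if i = j then ω else 0 := by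
  rw [cB_apply, cB_apply, iB_sub]
  split_ifs with h
  · subst h
    rw [iB_iB_self]
    linear_combination (norm := abel) iB_wB_add_wB_iB i ω
  · rw [iB_wB h, iB_iB h]
    abel

lemma cB_cB_self (i : Fin q) (ω : Ext q) : cB i (cB i ω) = -ω := by
  have h := cB_cB_add_cB_cB i i ω
  rw [if_pos rfl] at h
  linear_combination (norm := module) (2⁻¹ : ℝ) • h

lemma wB_bF {i : Fin q} {s : Finset (Fin q)} (h : i ∉ s) :
    wB i (bF s) = sgn i s • bF (insert i s) := by
  funext t
  simp only [wB, bF, Pi.smul_apply, smul_eq_mul, mul_ite, mul_one, mul_zero]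
  by_cases ht : t = insert i s
  · simp [ht, Finset.erase_insert h]
  · have : ¬(i ∈ t ∧ t.erase i = s) := fun ⟨hi, he⟩ => ht (by rw [← he, Finset.insert_erase hi])
    grind

lemma iB_bF {i : Fin q} {s : Finset (Fin q)} (h : i ∉ s) : iB i (bF s) = 0 := by
  funext t
  have : insert i t ≠ s := fun he => h (he ▸ Finset.mem_insert_self i t)
  simp [iB, bF, this]

lemma cB_bF {i : Fin q} {s : Finset (Fin q)} (h : i ∉ s) :
    cB i (bF s) = sgn i s • bF (insert i s) := by
  rw [cB_apply, wB_bF h, iB_bF h, sub_zero]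

lemma cB_eq_neg_smul_of_cB_eq_smul {i : Fin q} {x y : Ext q} {ε : ℝ} (hε : ε * ε = 1)
    (h : cB i x = ε • y) : cB i y = -(ε • x) := by
  have hy : y = ε • cB i x := by rw [h, smul_smul, hε, one_smul]
  rw [hy, map_smul, cB_cB_self, smul_neg]

lemma cB_bF_of_mem {i : Fin q} {s : Finset (Fin q)} (h : i ∈ s) :
    cB i (bF s) = -(sgn i (s.erase i) • bF (s.erase i)) := by
  refine cB_eq_neg_smul_of_cB_eq_smul (sgn_mul_self i _) ?_
  rw [cB_bF (Finset.notMem_erase i s), Finset.insert_erase h]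

def clVₗ (X : Fin q → ℝ) : Ext q →ₗ[ℝ] Ext q := ∑ k, X k • cB k

def iVₗ (X : Fin q → ℝ) : Ext q →ₗ[ℝ] Ext q := ∑ k, X k • iBₗ k

lemma clV_eq_clVₗ (X : Fin q → ℝ) (ω : Ext q) : clV X ω = clVₗ X ω := by
  simp [clV, wV, iV, clVₗ, cB_apply, smul_sub, Finset.sum_sub_distrib]

lemma iV_eq_iVₗ (X : Fin q → ℝ) (ω : Ext q) : iV X ω = iVₗ X ω := by
  simp [iV, iVₗ, iBₗ]

lemma clV_eB (i : Fin q) (ω : Ext q) : clV (eB i) ω = cB i ω := by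
  simp [clV_eq_clVₗ, clVₗ, eB, Pi.single_apply, ite_smul]

lemma clV_cB_add_cB_clV (X : Fin q → ℝ) (i : Fin q) (ω : Ext q) :
    clV X (cB i ω) + cB i (clV X ω) = -(2 * X i) • ω := by
  simp only [clV_eq_clVₗ, clVₗ, LinearMap.sum_apply, LinearMap.smul_apply, map_sum, map_smul,
    ← Finset.sum_add_distrib, ← smul_add, cB_cB_add_cB_cB, smul_ite, smul_zero,
    Finset.sum_ite_eq', Finset.mem_univ, if_true]
  module

lemma iV_cB_add_cB_iV (X : Fin q → ℝ) (i : Fin q) (ω : Ext q) :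
    iV X (cB i ω) + cB i (iV X ω) = X i • ω := by
  simp only [iV_eq_iVₗ, iVₗ, LinearMap.sum_apply, LinearMap.smul_apply, map_sum, map_smul,
    ← Finset.sum_add_distrib, ← smul_add]
  simp [iBₗ, iB_cB_add_cB_iB, smul_ite]

lemma cB_cB_of_ne {i j : Fin q} (h : i ≠ j) (ω : Ext q) : cB i (cB j ω) = -cB j (cB i ω) := by
  rw [eq_neg_iff_add_eq_zero, cB_cB_add_cB_cB, if_neg h]

def clBₗ (s : Finset (Fin q)) : Ext q →ₗ[ℝ] Ext q := ((Finset.sort s (· ≤ ·)).map cB).prod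

lemma clB_eq_clBₗ (s : Finset (Fin q)) (ω : Ext q) : clB s ω = clBₗ s ω := by
  rw [clB, clBₗ]
  induction Finset.sort s (· ≤ ·) with
  | nil => rfl
  | cons i l ih =>
    rw [List.foldr_cons, ih, List.map_cons, List.prod_cons, Module.End.mul_apply, clV_eB]

lemma clB_insert_of_forall_lt {i : Fin q} {s : Finset (Fin q)} (h : ∀ j ∈ s, i < j)
    (ω : Ext q) : clB (insert i s) ω = cB i (clB s ω) := by
  rw [clB_eq_clBₗ, clB_eq_clBₗ, clBₗ, clBₗ,
    Finset.sort_insert _ (fun j hj => (h j hj).le) fun hi => lt_irrefl i (h i hi),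
    List.map_cons, List.prod_cons, Module.End.mul_apply]

lemma cB_clB {i : Fin q} {s : Finset (Fin q)} (h : i ∉ s) (ω : Ext q) :
    cB i (clB s ω) = sgn i s • clB (insert i s) ω := by
  induction s using Finset.induction_on_min generalizing i with
  | empty => rw [sgn_of_forall_lt (by simp), one_smul, clB_insert_of_forall_lt (by simp)]
  | insert m s hm ih =>
    obtain ⟨him, his⟩ : i ≠ m ∧ i ∉ s := by simpa using h
    have hms : m ∉ s := fun h' => lt_irrefl m (hm m h')
    rcases him.lt_or_gt with hlt | hgt
    · have hall : ∀ j ∈ insert m s, i < j := by simpa [hlt] using fun j hj => hlt.trans (hm j hj)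
      rw [sgn_of_forall_lt hall, one_smul, clB_insert_of_forall_lt hall]
    · have hm' : ∀ j ∈ insert i s, m < j := by simpa [hgt] using hm
      rw [clB_insert_of_forall_lt hm, cB_cB_of_ne him, ih his, map_smul,
        ← clB_insert_of_forall_lt hm', Finset.insert_comm, sgn_insert i hms, if_pos hgt]
      module

lemma cB_clB_of_mem {i : Fin q} {s : Finset (Fin q)} (h : i ∈ s) (ω : Ext q) :
    cB i (clB s ω) = -(sgn i (s.erase i) • clB (s.erase i) ω) := by
  refine cB_eq_neg_smul_of_cB_eq_smul (sgn_mul_self i _) ?_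
  rw [cB_clB (Finset.notMem_erase i s), Finset.insert_erase h]

def clMₗ : Ext q →ₗ[ℝ] Ext q →ₗ[ℝ] Ext q :=
  ∑ s, (LinearMap.proj s : Ext q →ₗ[ℝ] ℝ).smulRight (clBₗ s)

lemma clM_eq_clMₗ (a b : Ext q) : clM a b = clMₗ a b := by
  simp [clM, clMₗ, clB_eq_clBₗ]

lemma clM_add_left (a b c : Ext q) : clM (a + b) c = clM a c + clM b c := by
  simp only [clM_eq_clMₗ, map_add, LinearMap.add_apply]

lemma clM_smul_left (r : ℝ) (a c : Ext q) : clM (r • a) c = r • clM a c := by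
  simp only [clM_eq_clMₗ, map_smul, LinearMap.smul_apply]

lemma clM_add_right (a b c : Ext q) : clM a (b + c) = clM a b + clM a c := by
  simp only [clM_eq_clMₗ, map_add]

lemma clM_sub_right (a b c : Ext q) : clM a (b - c) = clM a b - clM a c := by
  simp only [clM_eq_clMₗ, map_sub]

lemma clMₗ_bF (s : Finset (Fin q)) : clMₗ (bF s) = clBₗ s := by
  ext ω
  simp [clMₗ, bF, ite_smul]

lemma clBₗ_singleton (i : Fin q) : clBₗ {i} = cB i := by
  simp [clBₗ]

lemma sum_smul_bF (ω : Ext q) : ∑ s, ω s • bF s = ω := by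
  funext t
  simp [bF, Finset.sum_apply]

lemma bF_eq_single (s : Finset (Fin q)) : bF s = Pi.single s 1 := by
  funext t
  simp [bF, Pi.single_apply]

lemma linearMap_ext_bF {M : Type*} [AddCommGroup M] [Module ℝ M] {f g : Ext q →ₗ[ℝ] M}
    (h : ∀ s, f (bF s) = g (bF s)) : f = g :=
  (Pi.basisFun ℝ (Finset (Fin q))).ext fun s => by simpa [bF_eq_single] using h s

lemma clM_cB_left (i : Fin q) (a c : Ext q) : clM (cB i a) c = cB i (clM a c) := by
  suffices h : clMₗ.flip c ∘ₗ cB i = cB i ∘ₗ clMₗ.flip c by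
    simpa [clM_eq_clMₗ] using LinearMap.congr_fun h a
  refine linearMap_ext_bF fun s => ?_
  simp only [LinearMap.comp_apply, LinearMap.flip_apply]
  by_cases h : i ∈ s
  · simp only [cB_bF_of_mem h, map_neg, map_smul, LinearMap.neg_apply, LinearMap.smul_apply,
      clMₗ_bF, ← clB_eq_clBₗ, cB_clB_of_mem h]
  · simp only [cB_bF h, map_smul, LinearMap.smul_apply, clMₗ_bF, ← clB_eq_clBₗ, cB_clB h]

lemma clM_clB_left (s : Finset (Fin q)) (b c : Ext q) : clM (clB s b) c = clB s (clM b c) := by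
  rw [clB_eq_clBₗ, clB_eq_clBₗ, clBₗ]
  induction Finset.sort s (· ≤ ·) with
  | nil => rfl
  | cons i l ih => rw [List.map_cons, List.prod_cons, Module.End.mul_apply,
      Module.End.mul_apply, clM_cB_left, ih]

lemma clM_assoc (a b c : Ext q) : clM (clM a b) c = clM a (clM b c) := by
  suffices h : clMₗ.flip c ∘ₗ clMₗ.flip b = clMₗ.flip (clM b c) by
    simpa [clM_eq_clMₗ] using LinearMap.congr_fun h a
  refine linearMap_ext_bF fun s => ?_
  simp only [LinearMap.comp_apply, LinearMap.flip_apply, clMₗ_bF, ← clB_eq_clBₗ, ← clM_eq_clMₗ,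
    clM_clB_left]

lemma clM_oneF (X : Fin q → ℝ) (ω : Ext q) : clM (oneF X) ω = clV X ω := by
  simp [oneF, clM_eq_clMₗ, clMₗ_bF, clBₗ_singleton, clV_eq_clVₗ, clVₗ]

lemma cB_cB_clV_sub_clV_cB_cB (X : Fin q → ℝ) (i j : Fin q) (ω : Ext q) :
    cB i (cB j (clV X ω)) - clV X (cB i (cB j ω))
      = (2 : ℝ) • (iV X (cB i (cB j ω)) - cB i (cB j (iV X ω))) := by
  have h₁ := congrArg (cB i) (clV_cB_add_cB_clV X j ω)
  have h₂ := congrArg (cB i) (iV_cB_add_cB_iV X j ω)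
  simp only [map_add, map_smul] at h₁ h₂
  linear_combination (norm := module) h₁ - clV_cB_add_cB_clV X i (cB j ω)
    - (2 : ℝ) • iV_cB_add_cB_iV X i (cB j ω) + (2 : ℝ) • h₂

lemma iV_bF_empty (X : Fin q → ℝ) : iV X (bF ∅) = 0 := by
  simp [iV, iB_bF]

lemma clV_bF_empty (X : Fin q → ℝ) : clV X (bF ∅) = oneF X := by
  simp [clV_eq_clVₗ, clVₗ, oneF, cB_bF, sgn_of_forall_lt]

lemma bF_pair {i j : Fin q} (h : i < j) : bF {i, j} = cB i (cB j (bF ∅)) := by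
  rw [cB_bF (Finset.notMem_empty j), map_smul, cB_bF (by simpa using h.ne),
    sgn_of_forall_lt (by simp), sgn_of_forall_lt (by simpa using h)]
  simp

lemma clB_pair {i j : Fin q} (h : i < j) (ω : Ext q) : clB {i, j} ω = cB i (cB j ω) := by
  rw [clB_insert_of_forall_lt (by simpa using h), clB_eq_clBₗ, clBₗ_singleton]

lemma apply_eq_of_homog_two {M : Type*} [AddCommGroup M] [Module ℝ M] {f g : Ext q →ₗ[ℝ] M}
    (h : ∀ i j : Fin q, i < j → f (bF {i, j}) = g (bF {i, j})) {Ψ : Ext q} (hΨ : homog 2 Ψ) :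
    f Ψ = g Ψ := by
  rw [← sum_smul_bF Ψ, map_sum, map_sum]
  refine Finset.sum_congr rfl fun s _ => ?_
  by_cases hs : s.card = 2
  · obtain ⟨i, j, hij, rfl⟩ := Finset.card_eq_two.1 hs
    rcases hij.lt_or_gt with hlt | hgt
    · rw [map_smul, map_smul, h i j hlt]
    · rw [Finset.pair_comm, map_smul, map_smul, h j i hgt]
  · rw [hΨ s hs, zero_smul, map_zero, map_zero]

lemma clM_oneF_sub_of_homog_two {Ψ : Ext q} (hΨ : homog 2 Ψ) (X : Fin q → ℝ) :
    clM Ψ (oneF X) - clM (oneF X) Ψ = (2 : ℝ) • iV X Ψ := by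
  suffices h : (clMₗ.flip (oneF X) - clVₗ X) Ψ = ((2 : ℝ) • iVₗ X) Ψ by
    rwa [clM_oneF, clM_eq_clMₗ, clV_eq_clVₗ, iV_eq_iVₗ]
  refine apply_eq_of_homog_two (fun i j hij => ?_) hΨ
  simp only [LinearMap.sub_apply, LinearMap.flip_apply, LinearMap.smul_apply, ← clV_eq_clVₗ,
    ← iV_eq_iVₗ, clMₗ_bF, ← clB_eq_clBₗ]
  rw [clB_pair hij, bF_pair hij, ← clV_bF_empty, cB_cB_clV_sub_clV_cB_cB, iV_bF_empty, map_zero,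
    map_zero, sub_zero]

lemma brkt_add_right (a b c : Ext q) : brkt a (b + c) = brkt a b + brkt a c := by
  simp only [brkt, clM_add_right, clM_add_left]
  abel

lemma brkt_clV_of_homog_two {Ψ : Ext q} (hΨ : homog 2 Ψ) (X : Fin q → ℝ) (ω : Ext q) :
    brkt Ψ (clV X ω) = clV X (brkt Ψ ω) + (2 : ℝ) • clM (iV X Ψ) ω := by
  have hK : clM Ψ (oneF X) = clM (oneF X) Ψ + (2 : ℝ) • iV X Ψ := by
    rw [← clM_oneF_sub_of_homog_two hΨ X, add_sub_cancel]
  calc brkt Ψ (clV X ω)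
      = clM (clM Ψ (oneF X)) ω - clM (oneF X) (clM ω Ψ) := by
        rw [brkt, ← clM_oneF, clM_assoc, clM_assoc]
    _ = clM (oneF X) (clM Ψ ω - clM ω Ψ) + (2 : ℝ) • clM (iV X Ψ) ω := by
        rw [hK, clM_add_left, clM_smul_left, clM_assoc, clM_sub_right]
        abel
    _ = clV X (brkt Ψ ω) + (2 : ℝ) • clM (iV X Ψ) ω := by rw [clM_oneF, brkt]

theorem statement_1_general {q : ℕ} (Ψ ω : Ext q) (X : Fin q → ℝ)
    (hΨ : homog 2 Ψ) :
    brkt Ψ (wV X ω) = clV X (brkt Ψ ω) + (2 : ℝ) • clM (iV X Ψ) ω + brkt Ψ (iV X ω) := by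
  rw [← brkt_clV_of_homog_two hΨ, ← brkt_add_right, clV, sub_add_cancel]

/-- Lemma 3.2 of the paper. For a 2-form `Ψ`, a `p`-form `ω` and a
vector `X ∈ V`, `[Ψ, X∧ω] = X·[Ψ,ω] + 2(X⌟Ψ)·ω + [Ψ, X⌟ω]`. -/
theorem statement_1 {q p : ℕ} (hq : 1 ≤ q) (Ψ ω : Ext q) (X : Fin q → ℝ)
    (hΨ : homog 2 Ψ) (hω : homog p ω) :
    brkt Ψ (wV X ω) = clV X (brkt Ψ ω) + (2 : ℝ) • clM (iV X Ψ) ω + brkt Ψ (iV X ω) :=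
  statement_1_general Ψ ω X hΨ

end
end Paper
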